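/- For the semi-discrete scheme with symmetric positive semi-definite ω, the discrete entropy S = −h³ Σ_i f_i log f_i satisfies dS/dt = (1/2) h⁶ Σ_{i,j} [D⁻ log f_i − D⁻ log f_j]ᵀ ω(v_i,v_j) f_i f_j [D⁻ log f_i − D⁻ log f_j] ≥ 0, assuming f_i > 0 for all i. -/

import Mathlib

open Matrix

/-- Unit grid vector in direction `k`. -/
def egrid (k : Fin 3) : Fin 3 → ℤ := Pi.single k 1

/-- Central-difference discrete gradient. -/
noncomputable def Dminus (h : ℝ) (ψ : (Fin 3 → ℤ) → ℝ) (i : Fin 3 → ℤ) : Fin 3 → ℝ :=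
  fun k => (ψ (i + egrid k) - ψ (i - egrid k)) / (2 * h)

/-- Central-difference discrete divergence. -/
noncomputable def Dplus (h : ℝ) (ξ : (Fin 3 → ℤ) → Fin 3 → ℝ) (i : Fin 3 → ℤ) : ℝ :=
  ∑ k : Fin 3, (ξ (i + egrid k) k - ξ (i - egrid k) k) / (2 * h)

/-- Grid point `v_i = h·i`. -/
noncomputable def vg (h : ℝ) (i : Fin 3 → ℤ) : Fin 3 → ℝ := fun k => h * (i k : ℝ)

lemma shift_sum (S T : Finset (Fin 3 → ℤ)) (c : Fin 3 → ℤ) (G ψ : (Fin 3 → ℤ) → ℝ)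
    (hG : ∀ j, j ∉ S → G j = 0) (hTc : ∀ j ∈ S, j - c ∈ T) :
    ∑ i ∈ T, G (i + c) * ψ i = ∑ j ∈ S, G j * ψ (j - c) := by
  classical
  have h1 : ∑ j ∈ T.image (fun i => i + c), G j * ψ (j - c)
      = ∑ i ∈ T, G (i + c) * ψ (i + c - c) :=
    Finset.sum_image (fun x _ y _ hxy => by simpa using congrArg (fun z => z - c) hxy)
  simp only [add_sub_cancel_right] at h1
  rw [← h1]
  refine (Finset.sum_subset ?_ ?_).symm
  · intro j hj
    exact Finset.mem_image.mpr ⟨j - c, hTc j hj, by abel⟩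
  · intro j _ hj
    rw [hG j hj, zero_mul]

lemma symmetrize {α : Type*} (S : Finset α) (c : α → ℝ) (d : α → Fin 3 → ℝ)
    (M : α → α → Matrix (Fin 3) (Fin 3) ℝ) (hM : ∀ x y, M x y = M y x) :
    ∑ x ∈ S, ∑ y ∈ S, c x * c y * (d x ⬝ᵥ (M x y *ᵥ (d x - d y)))
    = (1/2) * ∑ x ∈ S, ∑ y ∈ S, (d x - d y) ⬝ᵥ (M x y *ᵥ (d x - d y)) * (c x * c y) := by
  have h1 : (∑ x ∈ S, ∑ y ∈ S, c x * c y * (d y ⬝ᵥ (M x y *ᵥ (d x - d y))))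
      = ∑ y ∈ S, ∑ x ∈ S, c x * c y * (d y ⬝ᵥ (M x y *ᵥ (d x - d y))) := Finset.sum_comm
  have h2 : (∑ x ∈ S, ∑ y ∈ S, c x * c y * (d y ⬝ᵥ (M x y *ᵥ (d x - d y))))
      + (∑ x ∈ S, ∑ y ∈ S, c x * c y * (d x ⬝ᵥ (M x y *ᵥ (d x - d y)))) = 0 := by
    rw [h1, ← Finset.sum_add_distrib]
    refine Finset.sum_eq_zero fun x hx => ?_
    rw [← Finset.sum_add_distrib]
    refine Finset.sum_eq_zero fun y hy => ?_
    rw [hM y x, show M x y *ᵥ (d y - d x) = -(M x y *ᵥ (d x - d y)) by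
      rw [← Matrix.mulVec_neg, neg_sub], dotProduct_neg]
    ring
  have h3 : (∑ x ∈ S, ∑ y ∈ S, c x * c y * (d x ⬝ᵥ (M x y *ᵥ (d x - d y))))
      - (∑ x ∈ S, ∑ y ∈ S, c x * c y * (d y ⬝ᵥ (M x y *ᵥ (d x - d y))))
      = ∑ x ∈ S, ∑ y ∈ S, (d x - d y) ⬝ᵥ (M x y *ᵥ (d x - d y)) * (c x * c y) := by
    rw [← Finset.sum_sub_distrib]
    refine Finset.sum_congr rfl fun x _ => ?_
    rw [← Finset.sum_sub_distrib]
    refine Finset.sum_congr rfl fun y _ => ?_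
    rw [sub_dotProduct]
    ring
  linarith

theorem stmt14 (h : ℝ) (hh : 0 < h)
    (ω : (Fin 3 → ℝ) → (Fin 3 → ℝ) → Matrix (Fin 3) (Fin 3) ℝ)
    (hsym : ∀ a b, ω a b = ω b a)
    (hPSD : ∀ a b x, 0 ≤ x ⬝ᵥ ((ω a b) *ᵥ x))
    (S : Finset (Fin 3 → ℤ))
    (f : ℝ → (Fin 3 → ℤ) → ℝ)
    (hpos : ∀ t i, i ∈ S → 0 < f t i)
    (hsupp : ∀ t i, i ∉ S → f t i = 0)
    (p : ℝ → (Fin 3 → ℤ) → Fin 3 → ℝ)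
    (hp : ∀ t i, p t i = fun k => h ^ 3 * ∑ j ∈ S, f t i * f t j *
        (((ω (vg h i) (vg h j)) *ᵥ
          (Dminus h (fun l => Real.log (f t l)) i -
            Dminus h (fun l => Real.log (f t l)) j)) k))
    (hODE : ∀ t i, HasDerivAt (fun τ => f τ i) (Dplus h (p t) i) t) :
    ∀ t, HasDerivAt (fun τ => -(h ^ 3) * ∑ i ∈ S, f τ i * Real.log (f τ i))
        ((1 / 2) * h ^ 6 * ∑ i ∈ S, ∑ j ∈ S,
          (Dminus h (fun l => Real.log (f t l)) i -
              Dminus h (fun l => Real.log (f t l)) j) ⬝ᵥ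
            ((ω (vg h i) (vg h j)) *ᵥ
              (Dminus h (fun l => Real.log (f t l)) i -
                Dminus h (fun l => Real.log (f t l)) j)) * (f t i * f t j)) t ∧
      0 ≤ (1 / 2) * h ^ 6 * ∑ i ∈ S, ∑ j ∈ S,
          (Dminus h (fun l => Real.log (f t l)) i -
              Dminus h (fun l => Real.log (f t l)) j) ⬝ᵥ
            ((ω (vg h i) (vg h j)) *ᵥ
              (Dminus h (fun l => Real.log (f t l)) i -
                Dminus h (fun l => Real.log (f t l)) j)) * (f t i * f t j) := by
  intro t
  classical
  set L : (Fin 3 → ℤ) → ℝ := fun l => Real.log (f t l) with hL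
  have hfne : ∀ i ∈ S, f t i ≠ 0 := fun i hi => (hpos t i hi).ne'
  -- p vanishes outside S
  have hq0 : ∀ j, j ∉ S → ∀ k, p t j k = 0 := by
    intro j hj k
    rw [hp]
    simp [hsupp t j hj]
  -- the hidden constraint: Dplus (p t) vanishes outside S
  have hDzero : ∀ i, i ∉ S → Dplus h (p t) i = 0 := by
    intro i hi
    have h1 : HasDerivAt (fun τ => f τ i) (Dplus h (p t) i) t := hODE t i
    rw [show (fun τ => f τ i) = fun _ => (0 : ℝ) from funext fun τ => hsupp τ i hi] at h1
    exact h1.unique (hasDerivAt_const t 0)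
  -- enlarged index set
  set T : Finset (Fin 3 → ℤ) :=
    S ∪ (Finset.univ : Finset (Fin 3)).biUnion
      (fun k => S.image (fun i => i + egrid k) ∪ S.image (fun i => i - egrid k)) with hT
  have hST : S ⊆ T := Finset.subset_union_left
  have hmemp : ∀ j ∈ S, ∀ k : Fin 3, j + egrid k ∈ T := by
    intro j hj k
    apply Finset.mem_union_right
    exact Finset.mem_biUnion.mpr ⟨k, Finset.mem_univ k,
      Finset.mem_union_left _ (Finset.mem_image_of_mem _ hj)⟩
  have hmemm : ∀ j ∈ S, ∀ k : Fin 3, j - egrid k ∈ T := by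
    intro j hj k
    apply Finset.mem_union_right
    exact Finset.mem_biUnion.mpr ⟨k, Finset.mem_univ k,
      Finset.mem_union_right _ (Finset.mem_image_of_mem _ hj)⟩
  -- summation by parts, per direction k
  have perk : ∀ k : Fin 3,
      ∑ i ∈ T, (p t (i + egrid k) k - p t (i - egrid k) k) / (2 * h) * (L i + 1)
      = ∑ j ∈ S, p t j k * (-(Dminus h L j k)) := by
    intro k
    have e1 : ∑ i ∈ T, p t (i + egrid k) k * (L i + 1)
        = ∑ j ∈ S, p t j k * (L (j - egrid k) + 1) :=
      shift_sum S T (egrid k) (fun j => p t j k) (fun i => L i + 1)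
        (fun j hj => hq0 j hj k) (fun j hj => hmemm j hj k)
    have e2 : ∑ i ∈ T, p t (i - egrid k) k * (L i + 1)
        = ∑ j ∈ S, p t j k * (L (j + egrid k) + 1) := by
      have e2' := shift_sum S T (-(egrid k)) (fun j => p t j k) (fun i => L i + 1)
        (fun j hj => hq0 j hj k) (fun j hj => by simpa [sub_neg_eq_add] using hmemp j hj k)
      simpa [← sub_eq_add_neg, sub_neg_eq_add] using e2'
    calc ∑ i ∈ T, (p t (i + egrid k) k - p t (i - egrid k) k) / (2 * h) * (L i + 1)
        = (∑ i ∈ T, p t (i + egrid k) k * (L i + 1)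
            - ∑ i ∈ T, p t (i - egrid k) k * (L i + 1)) / (2 * h) := by
          rw [← Finset.sum_sub_distrib, Finset.sum_div]
          exact Finset.sum_congr rfl fun i _ => by ring
      _ = (∑ j ∈ S, p t j k * (L (j - egrid k) + 1)
            - ∑ j ∈ S, p t j k * (L (j + egrid k) + 1)) / (2 * h) := by rw [e1, e2]
      _ = ∑ j ∈ S, p t j k * (-(Dminus h L j k)) := by
          rw [← Finset.sum_sub_distrib, Finset.sum_div]
          refine Finset.sum_congr rfl fun j _ => ?_
          simp only [Dminus]
          ring
  have sbp : ∑ i ∈ S, Dplus h (p t) i * (L i + 1)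
      = -∑ j ∈ S, ∑ k : Fin 3, p t j k * Dminus h L j k := by
    have ext : ∑ i ∈ S, Dplus h (p t) i * (L i + 1)
        = ∑ i ∈ T, Dplus h (p t) i * (L i + 1) :=
      Finset.sum_subset hST (fun i _ hi => by rw [hDzero i hi, zero_mul])
    rw [ext]
    simp only [Dplus, Finset.sum_mul]
    rw [Finset.sum_comm]
    calc ∑ k : Fin 3, ∑ i ∈ T,
          (p t (i + egrid k) k - p t (i - egrid k) k) / (2 * h) * (L i + 1)
        = ∑ k : Fin 3, ∑ j ∈ S, p t j k * (-(Dminus h L j k)) :=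
          Finset.sum_congr rfl fun k _ => perk k
      _ = -∑ j ∈ S, ∑ k : Fin 3, p t j k * Dminus h L j k := by
          rw [Finset.sum_comm]
          simp [mul_neg, Finset.sum_neg_distrib]
  -- expand p
  have step1 : ∀ j : Fin 3 → ℤ, ∑ k : Fin 3, p t j k * Dminus h L j k
      = h ^ 3 * ∑ l ∈ S, f t j * f t l *
          ((Dminus h L j) ⬝ᵥ (ω (vg h j) (vg h l) *ᵥ (Dminus h L j - Dminus h L l))) := by
    intro j
    calc ∑ k : Fin 3, p t j k * Dminus h L j k
        = ∑ k : Fin 3, (h ^ 3 * ∑ l ∈ S, f t j * f t l *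
            ((ω (vg h j) (vg h l) *ᵥ (Dminus h L j - Dminus h L l)) k)) * Dminus h L j k := by
          refine Finset.sum_congr rfl fun k _ => ?_
          rw [hp]
      _ = h ^ 3 * ∑ l ∈ S, f t j * f t l *
            ((Dminus h L j) ⬝ᵥ (ω (vg h j) (vg h l) *ᵥ (Dminus h L j - Dminus h L l))) := by
          simp only [dotProduct, Finset.mul_sum, Finset.sum_mul]
          rw [Finset.sum_comm]
          exact Finset.sum_congr rfl fun l _ => Finset.sum_congr rfl fun k _ => by ring
  have hsymm := symmetrize S (f t) (Dminus h L) (fun i j => ω (vg h i) (vg h j))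
      (fun x y => hsym _ _)
  have key : -(h ^ 3) * ∑ i ∈ S, Dplus h (p t) i * (L i + 1)
      = (1 / 2) * h ^ 6 * ∑ i ∈ S, ∑ j ∈ S,
          (Dminus h L i - Dminus h L j) ⬝ᵥ
            (ω (vg h i) (vg h j) *ᵥ (Dminus h L i - Dminus h L j)) * (f t i * f t j) := by
    rw [sbp]
    have h4 : ∑ j ∈ S, ∑ k : Fin 3, p t j k * Dminus h L j k
        = h ^ 3 * ∑ j ∈ S, ∑ l ∈ S, f t j * f t l *
            ((Dminus h L j) ⬝ᵥ (ω (vg h j) (vg h l) *ᵥ (Dminus h L j - Dminus h L l))) := by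
      rw [Finset.mul_sum]
      exact Finset.sum_congr rfl fun j _ => step1 j
    rw [h4, hsymm]
    ring
  constructor
  · have hder : HasDerivAt (fun τ => -(h ^ 3) * ∑ i ∈ S, f τ i * Real.log (f τ i))
        (-(h ^ 3) * ∑ i ∈ S, Dplus h (p t) i * (L i + 1)) t := by
      refine HasDerivAt.const_mul _ (HasDerivAt.fun_sum fun i hi => ?_)
      have h1 := (hODE t i).fun_mul ((hODE t i).log (hfne i hi))
      refine h1.congr_deriv ?_
      simp only [hL]
      rw [mul_comm (f t i), div_mul_cancel₀ _ (hfne i hi)]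
      ring
    rwa [key] at hder
  · apply mul_nonneg (by positivity)
    refine Finset.sum_nonneg fun i hi => Finset.sum_nonneg fun j hj => ?_
    exact mul_nonneg (hPSD _ _ _) (mul_nonneg (hpos t i hi).le (hpos t j hj).le)
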